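/- For every composition s = (s(1),…,s(a)) with s(i) ≥ 2 for all i, the set of s-trees is in bijection with the set of 312-avoiding Stirling (s−𝟏)-permutations; in particular these two sets have the same cardinality. -/

import Mathlib

/-- A planar rooted tree: a root together with a (possibly empty) ordered list of subtrees. -/
inductive PTree : Type where
  | node : List PTree → PTree

namespace PTree

/-- The signature of a planar rooted tree: the numbers of children of its internal
nodes, listed in preorder. -/
def signature : PTree → List ℕ
  | node [] => []
  | node (t :: ts) =>
    (t :: ts).length :: ((t :: ts).attach.map (fun x => signature x.1)).flatten
decreasing_by
  have := List.sizeOf_lt_of_mem x.2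
  simp at this ⊢
  omega

/-- The preorder word of a planar rooted tree: `true` (= N) for each internal node and
`false` (= E) for each leaf, nodes listed in preorder. -/
def word : PTree → List Bool
  | node ts => (!ts.isEmpty) :: (ts.attach.map (fun x => word x.1)).flatten
decreasing_by
  have := List.sizeOf_lt_of_mem x.2
  simp at this ⊢
  omega

end PTree

/-- `w` is an `s`-permutation: a word on the alphabet `{1,…,ℓ(s)}` with exactly `s(i)`
occurrences of each letter `i`. -/
def IsSPerm (s w : List ℕ) : Prop :=
  (∀ x ∈ w, 1 ≤ x ∧ x ≤ s.length) ∧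
    ∀ i : Fin s.length, w.count ((i : ℕ) + 1) = s.get i

/-- `w` avoids the pattern 212: there are no positions `p < q < r` with
`w_p = w_r` and `w_q < w_p`. -/
def Avoids212 (w : List ℕ) : Prop :=
  ¬ ∃ p q r : Fin w.length, p < q ∧ q < r ∧ w.get p = w.get r ∧ w.get q < w.get p

/-- `w` avoids the pattern 312: there are no positions `p < q < r` with
`w_q < w_r < w_p`. -/
def Avoids312 (w : List ℕ) : Prop :=
  ¬ ∃ p q r : Fin w.length, p < q ∧ q < r ∧ w.get q < w.get r ∧ w.get r < w.get p

/-!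
Label the internal nodes of a tree `o, o + 1, …` in preorder and, reading the tree depth first,
write a node's label once between any two consecutive children. A node with `k` children
contributes `k - 1` letters, and the children of a node carry disjoint consecutive intervals of
labels above the node's own, so the word has no subword `a b c` with `b < c ≤ a`. Conversely, in
such a word the minimal letter `o` is the root: avoiding `212` puts every other letter into a
single gap between the `o`'s, avoiding `312` makes the letters increase from gap to gap, so
splitting at `o` recovers the children's words, each again of this form.
-/

namespace List

variable {α : Type*}

theorem not_mem_of_mem_splitOn [BEq α] [LawfulBEq α] {x : α} :
    ∀ {xs l : List α}, l ∈ xs.splitOn x → x ∉ l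
  | [], l, hl => by simp_all
  | hd :: tl, l, hl => by
    rw [splitOn_cons_eq_if_modifyHead] at hl
    obtain ⟨l₀, ls, hsplit⟩ := exists_cons_of_ne_nil (splitOn_ne_nil x tl)
    have htl : ∀ {l}, l ∈ l₀ :: ls → x ∉ l := fun hl => not_mem_of_mem_splitOn (hsplit ▸ hl)
    split at hl
    · rcases mem_cons.1 hl with rfl | hl
      exacts [not_mem_nil, not_mem_of_mem_splitOn hl]
    next hhd =>
      rw [hsplit, modifyHead_cons, mem_cons] at hl
      rcases hl with rfl | hl
      · exact mem_cons.not.2 <| not_or.2 ⟨fun h => hhd (by simp [h]), htl mem_cons_self⟩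
      · exact htl (mem_cons_of_mem _ hl)

theorem sublist_intercalate_of_mem {sep l : List α} :
    ∀ {ls : List (List α)}, l ∈ ls → l <+ sep.intercalate ls
  | [_], hl => by simp_all
  | l' :: l'' :: ls, hl => by
    rw [intercalate_cons_cons]
    rcases mem_cons.1 hl with rfl | hl
    · exact sublist_append_left _ _ |>.trans (sublist_append_left _ _)
    · exact (sublist_intercalate_of_mem hl).trans (sublist_append_right _ _)

theorem length_lt_of_mem_splitOn [BEq α] [LawfulBEq α] {x : α} {xs l : List α}
    (hx : x ∈ xs) (hl : l ∈ xs.splitOn x) : l.length < xs.length := by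
  have hsub : l <+ xs := by
    simpa using sublist_intercalate_of_mem (sep := [x]) hl
  refine lt_of_le_of_ne hsub.length_le fun hlen => ?_
  exact not_mem_of_mem_splitOn hl (hsub.eq_of_length hlen ▸ hx)

theorem intercalate_singleton_perm (x : α) :
    ∀ ls : List (List α), [x].intercalate ls ~ replicate (ls.length - 1) x ++ ls.flatten
  | [] => by simp
  | [l] => by simp
  | l :: l' :: ls => by
    have ih := intercalate_singleton_perm x (l' :: ls)
    rw [intercalate_cons_cons, length_cons, Nat.add_sub_cancel, length_cons, replicate_succ,
      flatten_cons, append_assoc, singleton_append]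
    refine ((ih.cons x).append_left l).trans ?_
    exact perm_middle.trans ((perm_append_comm_assoc _ _ _).cons x)

theorem mem_intercalate_singleton {x y : α} {ls : List (List α)} (h : y ∈ [x].intercalate ls) :
    y = x ∨ ∃ l ∈ ls, y ∈ l := by
  have := (intercalate_singleton_perm x ls).subset h
  simp only [mem_append, mem_replicate, mem_flatten] at this
  exact this.imp_left And.right

theorem Perm.of_append_of_separated {p : α → Prop} [DecidablePred p] {u₁ v₁ u₂ v₂ : List α}
    (h : u₁ ++ v₁ ~ u₂ ++ v₂) (hu₁ : ∀ x ∈ u₁, p x) (hu₂ : ∀ x ∈ u₂, p x)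
    (hv₁ : ∀ x ∈ v₁, ¬ p x) (hv₂ : ∀ x ∈ v₂, ¬ p x) : u₁ ~ u₂ ∧ v₁ ~ v₂ := by
  have hfilter : ∀ u v : List α, (∀ x ∈ u, p x) → (∀ x ∈ v, ¬ p x) →
      (u ++ v).filter (fun x => decide (p x)) = u := fun u v hu hv => by
    rw [filter_append, filter_eq_self.2 (by simpa using hu),
      filter_eq_nil_iff.2 (by simpa using hv), append_nil]
  have hu : u₁ ~ u₂ := by
    simpa only [hfilter u₁ v₁ hu₁ hv₁, hfilter u₂ v₂ hu₂ hv₂] using h.filter (fun x => decide (p x))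
  exact ⟨hu, (perm_append_left_iff u₂).1 ((hu.append_right v₁).symm.trans h)⟩

theorem sublist_triple_iff {w : List α} {x y z : α} :
    [x, y, z] <+ w ↔ ∃ p q r : Fin w.length,
      p < q ∧ q < r ∧ w.get p = x ∧ w.get q = y ∧ w.get r = z := by
  rw [sublist_iff_exists_fin_orderEmbedding_get_eq]
  constructor
  · rintro ⟨f, hf⟩
    exact ⟨f 0, f 1, f 2, f.strictMono (show (0 : Fin 3) < 1 by decide),
      f.strictMono (show (1 : Fin 3) < 2 by decide), (hf 0).symm, (hf 1).symm, (hf 2).symm⟩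
  · rintro ⟨p, q, r, hpq, hqr, rfl, rfl, rfl⟩
    have hmono : StrictMono ![p, q, r] := by
      intro i j hij
      fin_cases i <;> fin_cases j <;> simp at hij ⊢ <;> omega
    exact ⟨OrderEmbedding.ofStrictMono _ hmono, fun i => by fin_cases i <;> rfl⟩

end List

open scoped List

def sortedWord (o : ℕ) : List ℕ → List ℕ
  | [] => []
  | k :: c => List.replicate k o ++ sortedWord (o + 1) c

theorem sortedWord_append (o : ℕ) (c₁ c₂ : List ℕ) :
    sortedWord o (c₁ ++ c₂) = sortedWord o c₁ ++ sortedWord (o + c₁.length) c₂ := by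
  induction c₁ generalizing o with
  | nil => rfl
  | cons k c ih => simp [sortedWord, ih, Nat.add_assoc, Nat.add_comm 1]

theorem mem_sortedWord {x o : ℕ} {c : List ℕ} (h : x ∈ sortedWord o c) :
    o ≤ x ∧ x < o + c.length := by
  induction c generalizing o with
  | nil => simp [sortedWord] at h
  | cons k c ih =>
    rcases List.mem_append.1 h with h | h
    · simp [List.eq_of_mem_replicate h]
    · have := ih h; simp only [List.length_cons]; omega

theorem count_sortedWord (o : ℕ) (c : List ℕ) (x : ℕ) :
    (sortedWord o c).count x = if o ≤ x then c.getD (x - o) 0 else 0 := by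
  induction c generalizing o with
  | nil => simp [sortedWord]
  | cons k c ih =>
    rw [sortedWord, List.count_append, List.count_replicate, ih]
    rcases Nat.lt_trichotomy x o with h | rfl | h
    · simp [h.ne', h.not_ge, show ¬ o + 1 ≤ x by omega]
    · simp
    · simp [h.ne, h.le, Nat.succ_le_of_lt h, show x - o = x - (o + 1) + 1 by omega]

theorem eq_nil_of_sortedWord_eq_nil {o : ℕ} {c : List ℕ} (hc : ∀ k ∈ c, 1 ≤ k)
    (h : sortedWord o c = []) : c = [] := by
  cases c with
  | nil => rfl
  | cons k c =>
    have := hc k List.mem_cons_self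
    simp [sortedWord, List.replicate_eq_nil_iff] at h
    omega

theorem isSPerm_iff_perm_sortedWord (s w : List ℕ) : IsSPerm s w ↔ w ~ sortedWord 1 s := by
  rw [List.perm_iff_count]
  constructor
  · rintro ⟨hmem, hcount⟩ x
    rw [count_sortedWord]
    split_ifs with hx
    · rcases lt_or_ge (x - 1) s.length with hxs | hxs
      · simpa [Nat.sub_add_cancel hx, hxs] using hcount ⟨x - 1, hxs⟩
      · rw [List.getD_eq_default _ _ hxs, List.count_eq_zero]
        exact fun h => by have := hmem x h; omega
    · exact List.count_eq_zero.2 fun h => hx (hmem x h).1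
  · intro h
    refine ⟨fun x hx => ?_, fun i => by simp [h, count_sortedWord]⟩
    have := mem_sortedWord ((List.perm_iff_count.2 h).subset hx)
    omega

/-- The patterns `212` and `312` together are the subwords `a b c` with `b < c ≤ a`. -/
def Avoids212And312 (w : List ℕ) : Prop :=
  ∀ ⦃a b c : ℕ⦄, [a, b, c] <+ w → b < c → a < c

theorem avoids212_and_avoids312_iff (w : List ℕ) :
    Avoids212 w ∧ Avoids312 w ↔ Avoids212And312 w := by
  simp only [Avoids212, Avoids312, Avoids212And312, List.sublist_triple_iff]
  constructor
  · rintro ⟨h212, h312⟩ a b c ⟨p, q, r, hpq, hqr, rfl, rfl, rfl⟩ hbc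
    by_contra! hca
    rcases hca.eq_or_lt with hca | hca
    exacts [h212 ⟨p, q, r, hpq, hqr, hca.symm, hca ▸ hbc⟩, h312 ⟨p, q, r, hpq, hqr, hbc, hca⟩]
  · intro h
    refine ⟨?_, ?_⟩ <;> rintro ⟨p, q, r, hpq, hqr, h₁, h₂⟩
    · exact (h ⟨p, q, r, hpq, hqr, rfl, rfl, rfl⟩ (h₁ ▸ h₂)).ne h₁
    · exact (h ⟨p, q, r, hpq, hqr, rfl, rfl, rfl⟩ h₁).not_gt h₂

namespace Avoids212And312

theorem of_sublist {u w : List ℕ} (hw : Avoids212And312 w) (h : u <+ w) : Avoids212And312 u :=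
  fun _ _ _ habc => hw (habc.trans h)

theorem singleton (o : ℕ) : Avoids212And312 [o] :=
  fun _ _ _ h => absurd h.length_le (by simp)

theorem append {u v : List ℕ} (hu : Avoids212And312 u) (hv : Avoids212And312 v)
    (huv : ∀ a ∈ u, ∀ b ∈ u ++ v, ∀ c ∈ v, b < c → a < c) : Avoids212And312 (u ++ v) := by
  intro a b c habc hbc
  obtain ⟨l₁, l₂, hsplit, h₁, h₂⟩ := List.sublist_append_iff.1 habc
  have mem₁ : ∀ {x}, x ∈ l₁ → x ∈ u := fun hx => h₁.subset hx
  have mem₂ : ∀ {x}, x ∈ l₂ → x ∈ v := fun hx => h₂.subset hx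
  match l₁, l₂, hsplit with
  | [], _, rfl => exact hv h₂ hbc
  | [_], _, rfl => exact huv a (mem₁ (by simp)) b (by simp [mem₂]) c (mem₂ (by simp)) hbc
  | [_, _], _, rfl => exact huv a (mem₁ (by simp)) b (by simp [mem₁]) c (mem₂ (by simp)) hbc
  | [_, _, _], [], rfl => exact hu h₁ hbc

theorem cons {o : ℕ} {w : List ℕ} (hw : Avoids212And312 w) (ho : ∀ x ∈ w, o ≤ x) :
    Avoids212And312 (o :: w) :=
  append (singleton o) hw fun a ha b hb c _ hbc => by
    simp only [List.mem_singleton] at ha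
    rcases List.mem_cons.1 hb with rfl | hb
    · exact ha ▸ hbc
    · exact ha ▸ (ho b hb).trans_lt hbc

theorem intercalate {o : ℕ} {B : List (List ℕ)} (hB : ∀ b ∈ B, Avoids212And312 b)
    (hinc : B.Pairwise fun u v => ∀ x ∈ u, ∀ y ∈ v, x < y) (ho : ∀ b ∈ B, ∀ x ∈ b, o < x) :
    Avoids212And312 ([o].intercalate B) := by
  match B with
  | [] => exact fun _ _ _ h => absurd h.length_le (by simp)
  | [b] => simpa using hB b (by simp)
  | b :: b' :: B =>
    rw [List.pairwise_cons] at hinc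
    have hrest := intercalate (fun b hb => hB b (List.mem_cons_of_mem _ hb)) hinc.2
      (fun b hb => ho b (List.mem_cons_of_mem _ hb))
    have hmem : ∀ y ∈ [o].intercalate (b' :: B), y = o ∨ ∀ x ∈ b, x < y := fun y hy =>
      (List.mem_intercalate_singleton hy).imp_right fun ⟨l, hl, hyl⟩ x hx => hinc.1 l hl x hx y hyl
    have hge : ∀ y ∈ b ++ o :: [o].intercalate (b' :: B), o ≤ y := by
      intro y hy
      rcases List.mem_append.1 hy with hy | hy
      · exact (ho b (by simp) y hy).le
      rcases List.mem_cons.1 hy with rfl | hy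
      · exact le_rfl
      rcases List.mem_intercalate_singleton hy with rfl | ⟨l, hl, hyl⟩
      · exact le_rfl
      · exact (ho l (by simp_all) y hyl).le
    rw [List.intercalate_cons_cons, List.append_assoc, List.singleton_append]
    refine append (hB b (by simp)) (cons hrest fun y hy => hge y (by simp [hy])) ?_
    intro a ha c' hc' c hc hlt
    have hco : c ≠ o := fun h => (hge c' hc').not_gt (h ▸ hlt)
    rcases List.mem_cons.1 hc with h | hc
    · exact absurd h hco
    · exact ((hmem c hc).resolve_left hco) a ha

theorem pairwise_of_intercalate {o : ℕ} :
    ∀ {B : List (List ℕ)}, Avoids212And312 ([o].intercalate B) → (∀ b ∈ B, ∀ x ∈ b, o < x) →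
      B.Pairwise fun u v => ∀ x ∈ u, ∀ y ∈ v, x < y
  | [], _, _ => List.Pairwise.nil
  | [_], _, _ => List.pairwise_singleton _ _
  | b :: b' :: B, hw, ho => by
    rw [List.intercalate_cons_cons, List.append_assoc, List.singleton_append] at hw
    refine List.pairwise_cons.2 ⟨fun v hv x hx y hy => ?_, ?_⟩
    · have hy' : y ∈ [o].intercalate (b' :: B) := (List.sublist_intercalate_of_mem hv).subset hy
      exact hw ((List.singleton_sublist.2 hx).append ((List.singleton_sublist.2 hy').cons_cons o))
        (ho v (List.mem_cons_of_mem _ hv) y hy)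
    · exact pairwise_of_intercalate
        (hw.of_sublist ((List.sublist_cons_self _ _).trans (List.sublist_append_right _ _)))
        fun b hb => ho b (List.mem_cons_of_mem _ hb)

end Avoids212And312

theorem exists_perm_sortedWord_of_append {u v : List ℕ} {o : ℕ} {c : List ℕ}
    (h : u ++ v ~ sortedWord o c) (huv : ∀ x ∈ u, ∀ y ∈ v, x < y) :
    ∃ c₁ c₂, c = c₁ ++ c₂ ∧ u ~ sortedWord o c₁ ∧ v ~ sortedWord (o + c₁.length) c₂ := by
  have hbound : ∀ x ∈ u ++ v, o ≤ x ∧ x < o + c.length := fun x hx => mem_sortedWord (h.subset hx)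
  have hex : ∃ m, ∀ x ∈ u, x < o + m := ⟨c.length, fun x hx => (hbound x (by simp [hx])).2⟩
  set m := Nat.find hex
  have hm : m ≤ c.length := Nat.find_min' hex fun x hx => (hbound x (by simp [hx])).2
  have hv : ∀ y ∈ v, o + m ≤ y := by
    intro y hy
    rcases Nat.eq_zero_or_pos m with hm0 | hm0
    · exact hm0 ▸ (hbound y (by simp [hy])).1
    · obtain ⟨x, hx, hxm⟩ : ∃ x ∈ u, o + (m - 1) ≤ x := by
        simpa using Nat.find_min hex (Nat.sub_one_lt_of_lt hm0)
      have := huv x hx y hy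
      omega
  have htake : (c.take m).length = m := List.length_take_of_le hm
  refine ⟨c.take m, c.drop m, (List.take_append_drop m c).symm, ?_⟩
  rw [← List.take_append_drop m c, sortedWord_append, htake] at h
  rw [htake]
  refine h.of_append_of_separated (p := (· < o + m)) (Nat.find_spec hex) ?_ ?_ ?_
  · exact fun x hx => by have := mem_sortedWord hx; omega
  · exact fun y hy => (hv y hy).not_gt
  · exact fun y hy => (mem_sortedWord hy).1.not_gt

theorem splitOn_spec {w : List ℕ} {o k : ℕ} {c : List ℕ} (hw : w ~ sortedWord o (k :: c))
    (havoids : Avoids212And312 w) :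
    (w.splitOn o).length = k + 1 ∧ (w.splitOn o).flatten ~ sortedWord (o + 1) c ∧
      (w.splitOn o).Pairwise fun u v => ∀ x ∈ u, ∀ y ∈ v, x < y := by
  set B := w.splitOn o
  have hBw : [o].intercalate B = w := List.intercalate_splitOn o
  have hgt : ∀ b ∈ B, ∀ x ∈ b, o < x := fun b hb x hx => by
    have hxw : x ∈ w := hBw ▸ (List.sublist_intercalate_of_mem hb).subset hx
    exact lt_of_le_of_ne (mem_sortedWord (hw.subset hxw)).1
      fun h => List.not_mem_of_mem_splitOn hb (h ▸ hx)
  obtain ⟨hrep, hflat⟩ : List.replicate (B.length - 1) o ~ List.replicate k o ∧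
      B.flatten ~ sortedWord (o + 1) c := by
    refine ((List.intercalate_singleton_perm o B).symm.trans (hBw ▸ hw)).of_append_of_separated
      (p := (· = o)) (fun x hx => List.eq_of_mem_replicate hx)
      (fun x hx => List.eq_of_mem_replicate hx) (fun x hx => ?_)
      (fun x hx => by have := (mem_sortedWord hx).1; omega)
    obtain ⟨b, hb, hxb⟩ := List.mem_flatten.1 hx
    exact (hgt b hb x hxb).ne'
  refine ⟨?_, hflat, (hBw ▸ havoids).pairwise_of_intercalate hgt⟩
  have hk : B.length - 1 = k := by simpa using hrep.length_eq
  have hpos : 0 < B.length := List.length_pos_iff.2 (List.splitOn_ne_nil o w)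
  omega

namespace PTree

theorem signature_node (ts : List PTree) :
    (node ts).signature = if ts = [] then [] else ts.length :: (ts.map signature).flatten := by
  cases ts with
  | nil => rw [signature]; rfl
  | cons t ts => rw [signature]; simp

mutual
def encode : ℕ → PTree → List ℕ
  | o, node ts => [o].intercalate (encodeChildren (o + 1) ts)

def encodeChildren : ℕ → List PTree → List (List ℕ)
  | _, [] => []
  | o, t :: ts => encode o t :: encodeChildren (o + t.signature.length) ts
end

def decode (w : List ℕ) : PTree :=
  if hw : w = [] then node []
  else node ((w.splitOn (w.min hw)).attach.map fun u => decode u.1)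
termination_by w.length
decreasing_by exact List.length_lt_of_mem_splitOn (List.min_mem hw) u.2

theorem decode_nil : decode [] = node [] := by
  rw [decode, dif_pos rfl]

theorem decode_of_mem_of_forall_le {w : List ℕ} {m : ℕ} (hm : m ∈ w) (hle : ∀ x ∈ w, m ≤ x) :
    decode w = node ((w.splitOn m).map decode) := by
  rw [decode, dif_neg (List.ne_nil_of_mem hm), (List.min_eq_iff _).2 ⟨hm, hle⟩]
  simp

theorem length_encodeChildren (o : ℕ) (ts : List PTree) :
    (encodeChildren o ts).length = ts.length := by
  induction ts generalizing o with
  | nil => rfl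
  | cons t ts ih => simp [encodeChildren, ih]

mutual
theorem encode_spec (o : ℕ) : ∀ T : PTree,
    encode o T ~ sortedWord o (T.signature.map (· - 1)) ∧ Avoids212And312 (encode o T)
  | node ts => by
    rw [encode, signature_node]
    split_ifs with hts
    · subst hts
      exact ⟨by rfl, fun _ _ _ h => absurd h.length_le (by simp [encodeChildren])⟩
    obtain ⟨hperm, havoids, hinc⟩ := encodeChildren_spec (o + 1) ts
    refine ⟨?_, Avoids212And312.intercalate havoids hinc fun b hb x hx => ?_⟩
    · refine (List.intercalate_singleton_perm o _).trans ?_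
      rw [length_encodeChildren]
      exact hperm.append_left _
    · exact (mem_sortedWord (hperm.subset (List.mem_flatten.2 ⟨b, hb, hx⟩))).1

theorem encodeChildren_spec (o : ℕ) : ∀ ts : List PTree,
    (encodeChildren o ts).flatten ~ sortedWord o ((ts.map signature).flatten.map (· - 1)) ∧
      (∀ b ∈ encodeChildren o ts, Avoids212And312 b) ∧
      (encodeChildren o ts).Pairwise fun u v => ∀ x ∈ u, ∀ y ∈ v, x < y
  | [] => ⟨by rfl, by simp [encodeChildren], List.Pairwise.nil⟩
  | t :: ts => by
    obtain ⟨hperm, havoids⟩ := encode_spec o t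
    obtain ⟨hperm', havoids', hinc'⟩ := encodeChildren_spec (o + t.signature.length) ts
    rw [encodeChildren, List.flatten_cons, List.map_cons, List.flatten_cons, List.map_append,
      sortedWord_append, List.length_map]
    refine ⟨hperm.append hperm', ?_, List.pairwise_cons.2 ⟨fun v hv x hx y hy => ?_, hinc'⟩⟩
    · simpa [havoids] using havoids'
    · have hx' := mem_sortedWord (hperm.subset hx)
      have hy' := mem_sortedWord (hperm'.subset (List.mem_flatten.2 ⟨v, hv, hy⟩))
      simp only [List.length_map] at hx'
      omega
end

theorem mem_encode {o x : ℕ} {T : PTree} (hx : x ∈ encode o T) : o ≤ x :=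
  (mem_sortedWord ((encode_spec o T).1.subset hx)).1

mutual
theorem decode_encode (o : ℕ) : ∀ T : PTree, (∀ k ∈ T.signature, 2 ≤ k) → decode (encode o T) = T
  | node [], _ => by rw [encode, encodeChildren, List.intercalate_nil, decode_nil]
  | node [t], hT => by simp [signature_node] at hT
  | node (t :: t' :: ts), hT => by
    have ho : o ∈ encode o (node (t :: t' :: ts)) := by simp [encode, encodeChildren]
    have hchildren : ∀ c ∈ t :: t' :: ts, ∀ k ∈ c.signature, 2 ≤ k := fun c hc k hk =>
      hT k <| by
        rw [signature_node, if_neg (List.cons_ne_nil _ _)]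
        exact List.mem_cons_of_mem _ (List.mem_flatten.2 ⟨_, List.mem_map_of_mem hc, hk⟩)
    have hsep : ∀ b ∈ encodeChildren (o + 1) (t :: t' :: ts), o ∉ b := fun b hb hob => by
      have := (mem_sortedWord ((encodeChildren_spec (o + 1) _).1.subset
        (List.mem_flatten.2 ⟨b, hb, hob⟩))).1
      omega
    rw [decode_of_mem_of_forall_le ho fun x hx => mem_encode hx, encode,
      List.splitOn_intercalate o hsep (by simp [encodeChildren]),
      map_decode_encodeChildren (o + 1) _ hchildren]

theorem map_decode_encodeChildren (o : ℕ) : ∀ ts : List PTree,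
    (∀ t ∈ ts, ∀ k ∈ t.signature, 2 ≤ k) → (encodeChildren o ts).map decode = ts
  | [], _ => rfl
  | t :: ts, hts => by
    rw [encodeChildren, List.map_cons, decode_encode o t (hts t (by simp)),
      map_decode_encodeChildren _ ts fun t' ht' => hts t' (by simp [ht'])]
end

theorem encodeChildren_map_decode {o : ℕ} {c : List ℕ} {B : List (List ℕ)}
    (hc : ∀ k ∈ c, 1 ≤ k) (hB : B.flatten ~ sortedWord o c)
    (hinc : B.Pairwise fun u v => ∀ x ∈ u, ∀ y ∈ v, x < y)
    (hdecode : ∀ b ∈ B, ∀ o c, (∀ k ∈ c, 1 ≤ k) → b ~ sortedWord o c →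
      (decode b).signature = c.map (· + 1) ∧ encode o (decode b) = b) :
    ((B.map decode).map signature).flatten = c.map (· + 1) ∧
      encodeChildren o (B.map decode) = B := by
  induction B generalizing o c with
  | nil =>
    obtain rfl := eq_nil_of_sortedWord_eq_nil hc (List.Perm.nil_eq hB).symm
    exact ⟨rfl, rfl⟩
  | cons b B ih =>
    rw [List.pairwise_cons] at hinc
    obtain ⟨c₁, c₂, rfl, hb, hB'⟩ := exists_perm_sortedWord_of_append hB
      fun x hx y hy => by
        obtain ⟨v, hv, hyv⟩ := List.mem_flatten.1 hy
        exact hinc.1 v hv x hx y hyv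
    obtain ⟨hsig, henc⟩ := hdecode b (by simp) o c₁ (fun k hk => hc k (by simp [hk])) hb
    obtain ⟨hsig', henc'⟩ := ih (fun k hk => hc k (by simp [hk])) hB' hinc.2
      fun b' hb' => hdecode b' (List.mem_cons_of_mem _ hb')
    simp only [List.map_cons, List.flatten_cons, List.map_append, hsig, hsig', encodeChildren,
      henc, List.length_map, henc', and_self]

theorem encode_decode (w : List ℕ) (o : ℕ) (c : List ℕ) (hc : ∀ k ∈ c, 1 ≤ k)
    (hw : w ~ sortedWord o c) (havoids : Avoids212And312 w) :
    (decode w).signature = c.map (· + 1) ∧ encode o (decode w) = w := by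
  match c, hc with
  | [], _ =>
    obtain rfl := hw.eq_nil
    rw [decode_nil, signature_node, if_pos rfl]
    exact ⟨rfl, rfl⟩
  | k :: c, hc =>
    have ho : o ∈ w := hw.symm.subset <| by
      have := hc k List.mem_cons_self
      simp [sortedWord, List.mem_replicate]
      omega
    have hge : ∀ x ∈ w, o ≤ x := fun x hx => (mem_sortedWord (hw.subset hx)).1
    obtain ⟨hlen, hflat, hinc⟩ := splitOn_spec hw havoids
    have hBw : [o].intercalate (w.splitOn o) = w := List.intercalate_splitOn o
    obtain ⟨hsig, henc⟩ := encodeChildren_map_decode (fun k hk => hc k (by simp [hk])) hflat hinc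
      fun b hb o' c' hc' hb' => encode_decode b o' c' hc' hb' <|
        havoids.of_sublist (hBw ▸ List.sublist_intercalate_of_mem hb)
    rw [decode_of_mem_of_forall_le ho hge, signature_node, if_neg (by simp [List.splitOn_ne_nil]),
      List.length_map, hlen, encode, henc, hBw]
    exact ⟨by simpa using hsig, rfl⟩
termination_by w.length
decreasing_by exact List.length_lt_of_mem_splitOn ho hb

end PTree

open PTree in
/-- For every composition `s` with all entries at least 2, the set of `s`-trees is in
bijection with the set of 312-avoiding Stirling `(s-𝟏)`-permutations. -/
theorem sTrees_equiv_stirling312 (s : List ℕ) (hs : ∀ x ∈ s, 2 ≤ x) :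
    Nonempty ({T : PTree // T.signature = s} ≃
      {w : List ℕ // IsSPerm (s.map (fun x => x - 1)) w ∧ Avoids212 w ∧ Avoids312 w}) := by
  have hc : ∀ k ∈ s.map (· - 1), 1 ≤ k := by
    simp only [List.mem_map]
    rintro _ ⟨x, hx, rfl⟩
    have := hs x hx
    omega
  have hcs : (s.map (· - 1)).map (· + 1) = s := by
    rw [List.map_map]
    refine (List.map_congr_left fun x hx => ?_).trans s.map_id
    have := hs x hx
    simp only [Function.comp_apply, id_eq]
    omega
  have hword : ∀ w, IsSPerm (s.map (· - 1)) w ∧ Avoids212 w ∧ Avoids312 w ↔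
      w ~ sortedWord 1 (s.map (· - 1)) ∧ Avoids212And312 w := fun w => by
    rw [isSPerm_iff_perm_sortedWord, avoids212_and_avoids312_iff]
  refine ⟨{
    toFun := fun ⟨T, hT⟩ => ⟨encode 1 T, (hword _).2 (hT ▸ encode_spec 1 T)⟩
    invFun := fun w => ⟨decode w.1, ?_⟩
    left_inv := fun ⟨T, hT⟩ => Subtype.ext (decode_encode 1 T fun k hk => hs k (hT ▸ hk))
    right_inv := fun w => Subtype.ext ?_ }⟩
  · obtain ⟨hperm, havoids⟩ := (hword w.1).1 w.2
    exact (encode_decode w.1 1 _ hc hperm havoids).1.trans hcs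
  · obtain ⟨hperm, havoids⟩ := (hword w.1).1 w.2
    exact (encode_decode w.1 1 _ hc hperm havoids).2
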